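/- For the guarded composition F of operator-valued functions F_1,...,F_n along {|i⟩} and any |Φ⟩ = ∑_i |i⟩⊗|φ_i⟩, |Ψ⟩ = ∑_i |i⟩⊗|ψ_i⟩ in H_C ⊗ H: ∑_{(δ_1,...,δ_n)} ⟨Φ| F(δ_1,...,δ_n)† F(δ_1,...,δ_n) |Ψ⟩ = ∑_{i=1}^n ⟨φ_i| (∑_{δ_i∈Δ_i} F_i(δ_i)† F_i(δ_i)) |ψ_i⟩. -/

import Mathlib

noncomputable section
open scoped InnerProductSpace
open Finset

/-- Coordinate model of the tensor product `H_C ⊗ H` along a fixed orthonormal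
basis of the `n`-dimensional coin space `H_C`. -/
abbrev TensorSp (n : ℕ) (H : Type*) [NormedAddCommGroup H] [InnerProductSpace ℂ H] : Type _ :=
  PiLp 2 (fun _ : Fin n => H)

variable {n : ℕ} {H : Type*} [NormedAddCommGroup H] [InnerProductSpace ℂ H]

/-- the pure tensor `c ⊗ ψ`. -/
def pureTensor (c : EuclideanSpace ℂ (Fin n)) (ψ : H) : TensorSp n H :=
  WithLp.toLp 2 (fun i => c i • ψ)

/-- the block-diagonal operator `∑ᵢ |i⟩⟨i| ⊗ Uᵢ`, i.e. the guarded composition of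
the `Uᵢ` along the computational basis of the coin space. -/
def blockDiag (U : Fin n → (H →ₗ[ℂ] H)) : TensorSp n H →ₗ[ℂ] TensorSp n H where
  toFun x := WithLp.toLp 2 (fun i => U i (x i))
  map_add' x y := WithLp.ofLp_injective 2 <| funext fun i => map_add (U i) _ _
  map_smul' c x := WithLp.ofLp_injective 2 <| funext fun i => map_smul (U i) _ _

/-- `A ⊗ B` in the coordinate model, `A` acting on the coin space. -/
def tensorOp (A : EuclideanSpace ℂ (Fin n) →ₗ[ℂ] EuclideanSpace ℂ (Fin n))
    (B : H →ₗ[ℂ] H) : TensorSp n H →ₗ[ℂ] TensorSp n H where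
  toFun x := WithLp.toLp 2 (fun i => ∑ b : Fin n, A (EuclideanSpace.single b 1) i • B (x b))
  map_add' x y := WithLp.ofLp_injective 2 <| funext fun i => by
    simp [map_add, smul_add, Finset.sum_add_distrib]
  map_smul' c x := WithLp.ofLp_injective 2 <| funext fun i => by
    simp [map_smul, Finset.smul_sum, smul_comm c]

/-- `A ⊗ I_H`. -/
def tensorLeft (A : EuclideanSpace ℂ (Fin n) →ₗ[ℂ] EuclideanSpace ℂ (Fin n)) :
    TensorSp n H →ₗ[ℂ] TensorSp n H :=
  tensorOp A LinearMap.id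

/-- A linear operator is unitary iff it preserves inner products and is bijective. -/
def IsUnitaryOp {E : Type*} [NormedAddCommGroup E] [InnerProductSpace ℂ E]
    (A : E →ₗ[ℂ] E) : Prop :=
  (∀ x y : E, ⟪A x, A y⟫_ℂ = ⟪x, y⟫_ℂ) ∧ Function.Bijective A

/-- Positive (semidefinite) operator. -/
def IsPosOp {E : Type*} [NormedAddCommGroup E] [InnerProductSpace ℂ E]
    (A : E →ₗ[ℂ] E) : Prop :=
  ∀ x : E, (⟪x, A x⟫_ℂ).im = 0 ∧ 0 ≤ (⟪x, A x⟫_ℂ).re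

/-- Löwner order `A ⊑ B`. -/
def Loewner {E : Type*} [NormedAddCommGroup E] [InnerProductSpace ℂ E]
    (A B : E →ₗ[ℂ] E) : Prop :=
  IsPosOp (B - A)

section guarded
variable [FiniteDimensional ℂ H] {Δ : Fin n → Type*} [∀ k, Fintype (Δ k)]

/-- the coefficients `λ_{kδ}`. -/
def lam (F : ∀ k, Δ k → (H →ₗ[ℂ] H)) (k : Fin n) (δ : Δ k) : ℝ :=
  Real.sqrt ((LinearMap.trace ℂ H (LinearMap.adjoint (F k δ) ∘ₗ F k δ)).re /
    ∑ τ : Δ k, (LinearMap.trace ℂ H (LinearMap.adjoint (F k τ) ∘ₗ F k τ)).re)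

/-- the guarded composition `□ᵢ |i⟩ → Fᵢ` of operator-valued functions, evaluated at
`⊕ᵢ δᵢ`. -/
def guardedComp (F : ∀ k, Δ k → (H →ₗ[ℂ] H)) (δ : ∀ k, Δ k) :
    TensorSp n H →ₗ[ℂ] TensorSp n H where
  toFun x := WithLp.toLp 2 (fun i => (∏ k ∈ Finset.univ.erase i, lam F k (δ k)) • F i (δ i) (x i))
  map_add' x y := WithLp.ofLp_injective 2 <| funext fun i => by simp [map_add, smul_add]
  map_smul' c x := WithLp.ofLp_injective 2 <| funext fun i => by
    simp [map_smul, smul_comm c]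

end guarded

/-- partial trace over the coin space of an operator on `H_C ⊗ H`. -/
def coinProj (i : Fin n) : TensorSp n H →ₗ[ℂ] H where
  toFun x := x i
  map_add' _ _ := rfl
  map_smul' _ _ := rfl

def coinIncl (i : Fin n) : H →ₗ[ℂ] TensorSp n H where
  toFun ψ := WithLp.toLp 2 (Pi.single i ψ)
  map_add' x y := by simp [Pi.single_add]
  map_smul' c x := by simp [Pi.single_smul]

def trCoin (A : TensorSp n H →ₗ[ℂ] TensorSp n H) : H →ₗ[ℂ] H :=
  ∑ i : Fin n, coinProj i ∘ₗ A ∘ₗ coinIncl i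

/-- the outer product `|x⟩⟨y|`. -/
def outer {E : Type*} [NormedAddCommGroup E] [InnerProductSpace ℂ E]
    (x y : E) : E →ₗ[ℂ] E :=
  ((innerSL ℂ y).toLinearMap).smulRight x

/-! Since `F(δ)` acts blockwise, `⟪F(δ)Φ, F(δ)Ψ⟫ = ∑ᵢ (∏_{k≠i} λ_{kδ_k}²) ⟪Fᵢ(δᵢ)φᵢ, Fᵢ(δᵢ)ψᵢ⟫`.
Summing over all `δ`, each factor `λ_{kδ_k}²` with `k ≠ i` sums to `1` over `δ_k` by the choice of
normalisation, which leaves `∑ᵢ ∑_{δᵢ} ⟪Fᵢ(δᵢ)φᵢ, Fᵢ(δᵢ)ψᵢ⟫`. -/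

theorem LinearMap.re_trace_adjoint_comp_self_nonneg {E : Type*} [NormedAddCommGroup E]
    [InnerProductSpace ℂ E] [FiniteDimensional ℂ E] (A : E →ₗ[ℂ] E) :
    0 ≤ (LinearMap.trace ℂ E (LinearMap.adjoint A ∘ₗ A)).re :=
  Complex.nonneg_iff.mp (A.isPositive_adjoint_comp_self.trace_nonneg) |>.1

theorem sum_sqrt_div_sum_sq {ι : Type*} [Fintype ι] (w : ι → ℝ) (hw : ∀ i, 0 ≤ w i)
    (hsum : ∑ j, w j ≠ 0) : ∑ i, Real.sqrt (w i / ∑ j, w j) ^ 2 = 1 := by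
  have hS : 0 ≤ ∑ j, w j := sum_nonneg fun j _ => hw j
  simp_rw [Real.sq_sqrt (div_nonneg (hw _) hS)]
  rw [← sum_div, div_self hsum]

theorem sum_pi_prod_erase_mul {ι : Type*} [Fintype ι] [DecidableEq ι] {Δ : ι → Type*}
    [∀ k, Fintype (Δ k)] {R : Type*} [CommSemiring R] (w : ∀ k, Δ k → R) (i : ι)
    (hw : ∀ k ≠ i, ∑ τ, w k τ = 1) (g : Δ i → R) :
    ∑ δ : ∀ k, Δ k, (∏ k ∈ univ.erase i, w k (δ k)) * g (δ i) = ∑ a, g a := by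
  have hprod : ∀ δ : ∀ k, Δ k,
      (∏ k ∈ univ.erase i, w k (δ k)) * g (δ i) = ∏ k, Function.update w i g k (δ k) := by
    -- with `g` as the `i`-th factor the sum over `δ` becomes a product of sums
    intro δ
    rw [← mul_prod_erase univ _ (mem_univ i), Function.update_self, mul_comm]
    congr 1
    exact prod_congr rfl fun k hk => by rw [Function.update_of_ne (ne_of_mem_erase hk)]
  rw [sum_congr rfl fun δ _ => hprod δ, ← Fintype.prod_sum,
    ← mul_prod_erase univ _ (mem_univ i), Function.update_self, prod_eq_one, mul_one]
  intro k hk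
  rw [Function.update_of_ne (ne_of_mem_erase hk)]
  exact hw k (ne_of_mem_erase hk)

theorem inner_sum_adjoint_comp_self_apply {𝕜 E : Type*} [RCLike 𝕜] [NormedAddCommGroup E]
    [InnerProductSpace 𝕜 E] [FiniteDimensional 𝕜 E] {α : Type*} [Fintype α]
    (A : α → E →ₗ[𝕜] E) (x y : E) :
    ⟪x, (∑ a, LinearMap.adjoint (A a) ∘ₗ A a) y⟫_𝕜 = ∑ a, ⟪A a x, A a y⟫_𝕜 := by
  simp only [LinearMap.sum_apply, inner_sum, LinearMap.comp_apply,
    LinearMap.adjoint_inner_right]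

section guarded
variable {n : ℕ} {H : Type*} [NormedAddCommGroup H] [InnerProductSpace ℂ H]
  [FiniteDimensional ℂ H] {Δ : Fin n → Type*} [∀ k, Fintype (Δ k)]

theorem sum_lam_sq (F : ∀ k, Δ k → (H →ₗ[ℂ] H)) (k : Fin n)
    (hden : (∑ τ : Δ k, (LinearMap.trace ℂ H (LinearMap.adjoint (F k τ) ∘ₗ F k τ)).re) ≠ 0) :
    ∑ τ, (lam F k τ : ℂ) ^ 2 = 1 := by
  exact_mod_cast sum_sqrt_div_sum_sq _ (fun τ => (F k τ).re_trace_adjoint_comp_self_nonneg) hden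

theorem inner_guardedComp (F : ∀ k, Δ k → (H →ₗ[ℂ] H)) (δ : ∀ k, Δ k) (Φ Ψ : TensorSp n H) :
    ⟪guardedComp F δ Φ, guardedComp F δ Ψ⟫_ℂ
      = ∑ i, (∏ k ∈ univ.erase i, (lam F k (δ k) : ℂ) ^ 2)
          * ⟪F i (δ i) (Φ i), F i (δ i) (Ψ i)⟫_ℂ := by
  rw [PiLp.inner_apply]
  refine sum_congr rfl fun i _ => ?_
  simp only [guardedComp, LinearMap.coe_mk, AddHom.coe_mk, PiLp.toLp_apply,
    inner_smul_left_eq_smul, inner_smul_right_eq_smul, Complex.real_smul]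
  push_cast
  rw [prod_pow, ← mul_assoc, sq]

end guarded

theorem guardedComp_inner_identity_general {n : ℕ} {H : Type*} [NormedAddCommGroup H]
    [InnerProductSpace ℂ H] [FiniteDimensional ℂ H]
    {Δ : Fin n → Type*} [∀ k, Fintype (Δ k)] (F : ∀ k, Δ k → (H →ₗ[ℂ] H))
    (hden : ∀ k, (∑ τ : Δ k,
      (LinearMap.trace ℂ H (LinearMap.adjoint (F k τ) ∘ₗ F k τ)).re) ≠ 0)
    (Φ Ψ : TensorSp n H) :
    ∑ δ : (∀ k, Δ k), ⟪guardedComp F δ Φ, guardedComp F δ Ψ⟫_ℂ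
      = ∑ i : Fin n, ⟪Φ i, (∑ δi : Δ i, LinearMap.adjoint (F i δi) ∘ₗ F i δi) (Ψ i)⟫_ℂ := by
  simp_rw [inner_guardedComp, inner_sum_adjoint_comp_self_apply]
  rw [sum_comm]
  exact sum_congr rfl fun i _ =>
    sum_pi_prod_erase_mul (fun k τ => (lam F k τ : ℂ) ^ 2) i (fun k _ => sum_lam_sq F k (hden k))
      fun a => ⟪F i a (Φ i), F i a (Ψ i)⟫_ℂ

/-- the key inner-product identity for the guarded composition:
`∑_δ ⟨Φ|F(δ)†F(δ)|Ψ⟩ = ∑ᵢ ⟨φᵢ| (∑_{δᵢ} Fᵢ(δᵢ)†Fᵢ(δᵢ)) |ψᵢ⟩`, where `Φ = ∑ᵢ|i⟩⊗φᵢ`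
and `Ψ = ∑ᵢ|i⟩⊗ψᵢ` (so `φᵢ = Φ i`, `ψᵢ = Ψ i` in the coordinate model). -/
theorem guardedComp_inner_identity {n : ℕ} {H : Type*} [NormedAddCommGroup H]
    [InnerProductSpace ℂ H] [FiniteDimensional ℂ H]
    {Δ : Fin n → Type*} [∀ k, Fintype (Δ k)] (F : ∀ k, Δ k → (H →ₗ[ℂ] H))
    (hovf : ∀ k, Loewner (∑ δ : Δ k, LinearMap.adjoint (F k δ) ∘ₗ F k δ) LinearMap.id)
    (hden : ∀ k, (∑ τ : Δ k,
      (LinearMap.trace ℂ H (LinearMap.adjoint (F k τ) ∘ₗ F k τ)).re) ≠ 0)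
    (Φ Ψ : TensorSp n H) :
    ∑ δ : (∀ k, Δ k), ⟪guardedComp F δ Φ, guardedComp F δ Ψ⟫_ℂ
      = ∑ i : Fin n, ⟪Φ i, (∑ δi : Δ i, LinearMap.adjoint (F i δi) ∘ₗ F i δi) (Ψ i)⟫_ℂ :=
  guardedComp_inner_identity_general F hden Φ Ψ
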